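/- (Finiteness of the Hardt–Simon weighted integral pins down the value at the center; used in the last paragraph of the proof of Theorem 4.1 of the paper.) Let n ≥ 1, z ∈ ℝⁿ, ρ > 0, a ∈ ℝ, and let u : B_ρ(z) → ℝ be continuously differentiable. If ∫_{B_ρ(z)} |x−z|^{−n−2} |∇u(x)·(x−z) − (u(x) − a)|² dx < ∞ (equivalently, writing R_z(x) = |x−z|, if ∫_{B_ρ(z)} R_z^{2−n} (∂((u − a)/R_z)/∂R_z)² < ∞), then u(z) = a. -/
import Mathlib


open MeasureTheory Metric
open scoped ENNReal NNReal

noncomputable section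

namespace PaperStmt

/-- `n`-dimensional Euclidean space `ℝⁿ`. -/
abbrev En (n : ℕ) : Type := EuclideanSpace ℝ (Fin n)

/-- **Finiteness of the Hardt–Simon weighted integral pins down the value at the center**
(used in the last paragraph of the proof of Theorem 4.1). If `u` is continuously
differentiable on `B_ρ(z)` and
`∫_{B_ρ(z)} |x-z|^{-n-2} |∇u(x)·(x-z) - (u(x)-a)|² dx < ∞`, then `u(z) = a`. -/
theorem statement_14 {n : ℕ} (hn : 1 ≤ n) (z : En n) {ρ : ℝ} (hρ : 0 < ρ)
    (a : ℝ) (u : En n → ℝ) (hu : ContDiffOn ℝ 1 u (ball z ρ))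
    (hint : IntegrableOn
      (fun x => ‖x - z‖ ^ (-(n : ℝ) - 2) * (fderiv ℝ u x (x - z) - (u x - a)) ^ 2)
      (ball z ρ)) :
    u z = a := by
  by_contra hne
  haveI : Nonempty (Fin n) := ⟨⟨0, hn⟩⟩
  haveI : Nontrivial (En n) := by infer_instance
  set f : En n → ℝ :=
    fun x => ‖x - z‖ ^ (-(n : ℝ) - 2) * (fderiv ℝ u x (x - z) - (u x - a)) ^ 2 with hf
  set g : En n → ℝ := fun x => fderiv ℝ u x (x - z) - (u x - a) with hg
  set c : ℝ := |u z - a| with hc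
  have hc0 : 0 < c := abs_pos.2 (sub_ne_zero.2 hne)
  have hzmem : z ∈ ball z ρ := mem_ball_self hρ
  have hgc : ContinuousOn g (ball z ρ) := by
    apply ContinuousOn.sub
    · exact (hu.continuousOn_fderiv_of_isOpen isOpen_ball le_rfl).clm_apply
        (continuousOn_id.sub continuousOn_const)
    · exact hu.continuousOn.sub continuousOn_const
  have hgz : |g z| = c := by
    have : g z = -(u z - a) := by
      simp [hg, sub_self]
    rw [this, abs_neg]
  have hcont : ContinuousAt g z := hgc.continuousAt (isOpen_ball.mem_nhds hzmem)
  obtain ⟨δ, hδ0, hδρ, hδball⟩ : ∃ δ > 0, δ ≤ ρ ∧ ∀ x ∈ ball z δ, c / 2 ≤ |g x| := by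
    rcases Metric.continuousAt_iff.1 hcont (c / 2) (by positivity) with ⟨δ1, hδ1, hδ1'⟩
    refine ⟨min δ1 ρ, lt_min hδ1 hρ, min_le_right _ _, fun x hx => ?_⟩
    have hx1 : dist x z < δ1 := lt_of_lt_of_le hx (min_le_left _ _)
    have := hδ1' hx1
    rw [Real.dist_eq] at this
    have h2 : |g x - g z| < c / 2 := by simpa [Real.dist_eq] using hδ1' hx1
    have h3 : |g z| - |g x| ≤ |g x - g z| := by
      rw [abs_sub_comm (g x) (g z)]; exact abs_sub_abs_le_abs_sub (g z) (g x)
    rw [hgz] at h3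
    linarith
  have hδfin : IntegrableOn f (ball z δ) := hint.mono_set (ball_subset_ball hδρ)
  set I : ℝ≥0∞ := ∫⁻ x in ball z δ, ENNReal.ofReal (f x) with hIdef
  have hItop : I ≠ ∞ := by
    have h1 : I ≤ ∫⁻ x in ball z δ, (‖f x‖₊ : ℝ≥0∞) :=
      lintegral_mono fun x => Real.ofReal_le_enorm _
    exact (lt_of_le_of_lt h1 hδfin.2).ne
  set V : ℝ≥0∞ := volume (ball (0 : En n) 1) with hVdef
  have hV0 : 0 < V := measure_ball_pos _ _ one_pos
  have hVtop : V ≠ ∞ := measure_ball_lt_top.ne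
  have hball : ∀ t : ℝ, 0 ≤ t → volume (ball z t) = ENNReal.ofReal (t ^ n) * V := by
    intro t ht
    rw [Measure.addHaar_ball volume z ht, finrank_euclideanSpace_fin]
  -- the key annulus estimate
  have key : ∀ k : ℕ,
      ENNReal.ofReal ((c / 2) ^ 2 * (δ / 2 ^ k) ^ (-(n : ℝ) - 2)) *
        (ENNReal.ofReal ((δ / 2 ^ k) ^ n - (δ / 2 ^ (k + 1)) ^ n) * V) ≤ I := by
    intro k
    set s : ℝ := δ / 2 ^ k with hs
    set r : ℝ := δ / 2 ^ (k + 1) with hr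
    have hs0 : 0 < s := by positivity
    have hr0 : 0 < r := by positivity
    have hrs : r ≤ s := by
      apply div_le_div_of_nonneg_left hδ0.le (by positivity)
      exact pow_le_pow_right₀ one_le_two (Nat.le_succ k)
    have hsδ : s ≤ δ := by
      apply div_le_self hδ0.le
      exact one_le_pow₀ one_le_two
    set A : Set (En n) := ball z s \ ball z r with hA
    have hAm : MeasurableSet A := measurableSet_ball.diff measurableSet_ball
    have hAδ : A ⊆ ball z δ := Set.diff_subset.trans (ball_subset_ball hsδ)
    have hvolA : volume A = ENNReal.ofReal (s ^ n - r ^ n) * V := by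
      rw [hA, measure_diff (ball_subset_ball hrs) measurableSet_ball.nullMeasurableSet
          measure_ball_lt_top.ne, hball s hs0.le, hball r hr0.le,
          ENNReal.ofReal_sub _ (by positivity), ENNReal.sub_mul]
      intro _ _; exact hVtop
    have hpt : ∀ x ∈ A, ENNReal.ofReal ((c / 2) ^ 2 * s ^ (-(n : ℝ) - 2)) ≤
        ENNReal.ofReal (f x) := by
      intro x hx
      apply ENNReal.ofReal_le_ofReal
      have hxr : r ≤ ‖x - z‖ := by
        have h := hx.2
        rw [mem_ball, dist_eq_norm] at h
        exact not_lt.1 h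
      have hxs : ‖x - z‖ ≤ s := by
        have h := hx.1
        rw [mem_ball, dist_eq_norm] at h
        exact h.le
      have hx0 : 0 < ‖x - z‖ := lt_of_lt_of_le hr0 hxr
      have h1 : s ^ (-(n : ℝ) - 2) ≤ ‖x - z‖ ^ (-(n : ℝ) - 2) := by
        apply Real.rpow_le_rpow_of_nonpos hx0 hxs
        have : (0 : ℝ) ≤ n := Nat.cast_nonneg n
        linarith
      have h2 : (c / 2) ^ 2 ≤ g x ^ 2 := by
        have h' : c / 2 ≤ |g x| := hδball x (hAδ hx)
        calc (c / 2) ^ 2 ≤ |g x| ^ 2 := by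
              apply pow_le_pow_left₀ (by positivity) h'
          _ = g x ^ 2 := sq_abs _
      have hfx : f x = ‖x - z‖ ^ (-(n : ℝ) - 2) * g x ^ 2 := rfl
      rw [hfx, mul_comm ((c / 2) ^ 2)]
      exact mul_le_mul h1 h2 (by positivity) (by positivity)
    calc ENNReal.ofReal ((c / 2) ^ 2 * s ^ (-(n : ℝ) - 2)) *
          (ENNReal.ofReal (s ^ n - r ^ n) * V)
        = ENNReal.ofReal ((c / 2) ^ 2 * s ^ (-(n : ℝ) - 2)) * volume A := by rw [hvolA]
      _ = ∫⁻ _ in A, ENNReal.ofReal ((c / 2) ^ 2 * s ^ (-(n : ℝ) - 2)) :=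
          (setLIntegral_const _ _).symm
      _ ≤ ∫⁻ x in A, ENNReal.ofReal (f x) :=
          setLIntegral_mono_ae' hAm (Filter.Eventually.of_forall hpt)
      _ ≤ I := lintegral_mono_set hAδ
  -- pass to real numbers
  set B : ℝ := (c / 2) ^ 2 * (1 - (1 / 2 : ℝ) ^ n) * V.toReal with hBdef
  have hhalf : (1 / 2 : ℝ) ^ n < 1 := pow_lt_one₀ (by norm_num) (by norm_num) (by omega)
  have hB0 : 0 < B := by
    apply mul_pos (mul_pos (by positivity) (by linarith))
    exact ENNReal.toReal_pos hV0.ne' hVtop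
  have keyR : ∀ k : ℕ, B * 4 ^ k / δ ^ 2 ≤ I.toReal := by
    intro k
    have hk := ENNReal.toReal_mono hItop (key k)
    set s : ℝ := δ / 2 ^ k with hs
    have hs0 : 0 < s := by positivity
    have hd : δ / 2 ^ (k + 1) = s / 2 := by rw [hs, pow_succ, ← div_div]
    have hrsn : (δ / 2 ^ (k + 1)) ^ n = s ^ n * (1 / 2 : ℝ) ^ n := by
      rw [hd, div_eq_mul_one_div, mul_pow]
    have hsub : s ^ n - (δ / 2 ^ (k + 1)) ^ n = s ^ n * (1 - (1 / 2 : ℝ) ^ n) := by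
      rw [hrsn]; ring
    have hsubpos : 0 ≤ s ^ n - (δ / 2 ^ (k + 1)) ^ n := by
      rw [hsub]
      exact mul_nonneg (by positivity) (by linarith)
    rw [ENNReal.toReal_mul, ENNReal.toReal_mul, ENNReal.toReal_ofReal (by positivity),
      ENNReal.toReal_ofReal hsubpos] at hk
    have hpow : s ^ (-(n : ℝ) - 2) * s ^ n = 4 ^ k / δ ^ 2 := by
      have e1 : s ^ (-(n : ℝ) - 2) * s ^ n = s ^ ((-(n : ℝ) - 2) + n) := by
        rw [← Real.rpow_natCast s n, ← Real.rpow_add hs0]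
      rw [e1, show (-(n : ℝ) - 2) + n = -2 by ring,
        show (-2 : ℝ) = -((2 : ℕ) : ℝ) by norm_num,
        Real.rpow_neg hs0.le, Real.rpow_natCast]
      rw [hs, div_pow, ← inv_div]
      congr 2
      rw [← pow_mul, mul_comm, pow_mul]
      norm_num
    calc B * 4 ^ k / δ ^ 2
        = (c / 2) ^ 2 * s ^ (-(n : ℝ) - 2) *
            (s ^ n - (δ / 2 ^ (k + 1)) ^ n) * V.toReal := by
          rw [hsub]
          have e : (c / 2) ^ 2 * s ^ (-(n : ℝ) - 2) * (s ^ n * (1 - (1 / 2 : ℝ) ^ n)) *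
                V.toReal
              = (c / 2) ^ 2 * (s ^ (-(n : ℝ) - 2) * s ^ n) * (1 - (1 / 2 : ℝ) ^ n) *
                V.toReal := by ring
          rw [e, hpow, hBdef]
          ring
      _ ≤ I.toReal := by
          calc (c / 2) ^ 2 * s ^ (-(n : ℝ) - 2) *
                (s ^ n - (δ / 2 ^ (k + 1)) ^ n) * V.toReal
              = (c / 2) ^ 2 * s ^ (-(n : ℝ) - 2) *
                ((s ^ n - (δ / 2 ^ (k + 1)) ^ n) * V.toReal) := by ring
            _ ≤ I.toReal := hk
  -- derive contradiction
  obtain ⟨k, hk⟩ := pow_unbounded_of_one_lt (I.toReal * δ ^ 2 / B) (show (1:ℝ) < 4 by norm_num)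
  have h1 : I.toReal * δ ^ 2 < B * 4 ^ k := by
    rw [div_lt_iff₀ hB0] at hk
    linarith
  have h2 : I.toReal < B * 4 ^ k / δ ^ 2 := by
    rw [lt_div_iff₀ (by positivity)]
    linarith
  exact absurd (keyR k) (not_le.2 h2)

end PaperStmt
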